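/- arXiv:0909.0356 — 3 statements merged into one kernel-verified Lean document; each statement's English description precedes it below -/
import Mathlib

section
/- Let x be a nilpotent endomorphism of an n-dimensional vector space V over a field k, with Jordan basis {v_{ij} : 1 ≤ i ≤ l, 1 ≤ j ≤ λ_i} (so x v_{i,1} = 0 and x v_{i,j} = v_{i,j−1} for j > 1). An endomorphism y of V, with coefficients c_{ij}^{rs}(y) defined by y v_{ij} = Σ_{r,s} c_{ij}^{rs}(y) v_{rs}, commutes with x if and only if: (i) c_{ij}^{rs}(y) = c_{i,j−m}^{r,s−m}(y) for all m < s ≤ λ_r and m < j ≤ λ_i; (ii) c_{ij}^{rs}(y) = 0 if s > j; and (iii) c_{ij}^{r λ_r}(y) = 0 if j ≠ λ_i. -/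
/-!
In the Jordan basis `x` lowers each string by one, so comparing the `v_{r,t}`-coefficients of
`x y v_{i,j}` and `y x v_{i,j}` gives `c_{i,j}^{r,t+1} = c_{i,j-1}^{r,t}`, where the left side is
read as `0` at the top `t` of string `r` and the right side as `0` at `j = 0`. This one-step
relation only involves the block of strings `(i, r)`. Iterating it gives (i); walking down to
`j = 0` gives (ii); at the top of string `r` it gives (iii). Conversely, (i) with `m = 1`, (ii)
and (iii) recover the one-step relation.
-/

namespace Fin

def truncSub {n : ℕ} (j : Fin n) (m : ℕ) : Fin n :=
  ⟨j - m, Nat.lt_of_le_of_lt (Nat.sub_le _ _) j.isLt⟩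

@[simp]
lemma val_truncSub {n : ℕ} (j : Fin n) (m : ℕ) : (j.truncSub m : ℕ) = j - m := rfl

end Fin

section JordanBlock

variable {M : Type*} {p q : ℕ}

lemma apply_congr_val (C : Fin p → Fin q → M) {j j' : Fin p} {s s' : Fin q}
    (hj : (j : ℕ) = j') (hs : (s : ℕ) = s') : C j s = C j' s' := by
  rw [Fin.ext hj, Fin.ext hs]

variable [Zero M]

/-- The `(i, r)` block of `x * y = y * x` read off coefficientwise, for Jordan strings `i`, `r` of
lengths `p`, `q`: `C j s` is the `v_{r,s}`-coefficient of `y v_{i,j}` (positions from `0`). -/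
def IntertwinesShift (C : Fin p → Fin q → M) : Prop :=
  ∀ (j : Fin p) (t : Fin q),
    (if h : (t : ℕ) + 1 < q then C j ⟨t + 1, h⟩ else 0) =
      if 0 < (j : ℕ) then C (j.truncSub 1) t else 0

variable {C : Fin p → Fin q → M}

namespace IntertwinesShift

lemma apply_eq_apply_truncSub_one (h : IntertwinesShift C) {j : Fin p} {s : Fin q}
    (hj : 0 < (j : ℕ)) (hs : 0 < (s : ℕ)) : C j s = C (j.truncSub 1) (s.truncSub 1) := by
  have hs' := s.isLt
  have := h j (s.truncSub 1)
  rw [dif_pos (by simp; omega), if_pos hj] at this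
  exact (apply_congr_val C rfl (by simp; omega)).trans this

lemma apply_eq_zero_of_val_eq_zero (h : IntertwinesShift C) {j : Fin p} {s : Fin q}
    (hj : (j : ℕ) = 0) (hs : 0 < (s : ℕ)) : C j s = 0 := by
  have hs' := s.isLt
  have := h j (s.truncSub 1)
  rw [dif_pos (by simp; omega), if_neg (by omega)] at this
  exact (apply_congr_val C rfl (by simp; omega)).trans this

lemma apply_eq_apply_truncSub (h : IntertwinesShift C) {j : Fin p} {s : Fin q} {m : ℕ}
    (hs : m ≤ (s : ℕ)) (hj : m ≤ (j : ℕ)) : C j s = C (j.truncSub m) (s.truncSub m) := by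
  induction m with
  | zero => rfl
  | succ m ih =>
    rw [ih (by omega) (by omega),
      h.apply_eq_apply_truncSub_one (by simp; omega) (by simp; omega)]
    exact apply_congr_val C (by simp; omega) (by simp; omega)

lemma apply_eq_zero_of_lt (h : IntertwinesShift C) {j : Fin p} {s : Fin q}
    (hjs : (j : ℕ) < s) : C j s = 0 := by
  rw [h.apply_eq_apply_truncSub (m := j) hjs.le le_rfl]
  exact h.apply_eq_zero_of_val_eq_zero (by simp) (by simp; omega)

lemma apply_last_eq_zero (h : IntertwinesShift C) (hq : 0 < q) {j : Fin p}
    (hj : (j : ℕ) ≠ p - 1) : C j ⟨q - 1, Nat.sub_lt hq one_pos⟩ = 0 := by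
  have hj' := j.isLt
  have := h ⟨j + 1, by omega⟩ ⟨q - 1, Nat.sub_lt hq one_pos⟩
  rw [dif_neg (by simp; omega), if_pos (by simp)] at this
  exact (apply_congr_val C (by simp) rfl).trans this.symm

end IntertwinesShift

lemma intertwinesShift_iff (hq : 0 < q) :
    IntertwinesShift C ↔
      (∀ (j : Fin p) (s : Fin q) (m : ℕ), m ≤ (s : ℕ) → m ≤ (j : ℕ) →
        C j s = C (j.truncSub m) (s.truncSub m)) ∧
      (∀ (j : Fin p) (s : Fin q), (j : ℕ) < s → C j s = 0) ∧
      (∀ j : Fin p, (j : ℕ) ≠ p - 1 → C j ⟨q - 1, Nat.sub_lt hq one_pos⟩ = 0) := by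
  refine ⟨fun h => ⟨fun _ _ _ => h.apply_eq_apply_truncSub, fun _ _ => h.apply_eq_zero_of_lt,
    fun _ => h.apply_last_eq_zero hq⟩,
    fun ⟨h₁, h₂, h₃⟩ j t => ?_⟩
  have ht := t.isLt
  have hj := j.isLt
  split_ifs with hlast hj0 hj0
  · by_cases hle : (t : ℕ) + 1 ≤ j
    · exact (h₁ j _ 1 (by simp) hj0).trans (apply_congr_val C rfl (by simp))
    · rw [h₂ j _ (by simp; omega), h₂ _ t (by simp; omega)]
  · exact h₂ j _ (by simp; omega)
  · rw [apply_congr_val C (s' := ⟨q - 1, Nat.sub_lt hq one_pos⟩) rfl (by simp; omega),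
      h₃ _ (by simp; omega)]
  · rfl

end JordanBlock

section JordanBasis

variable {k V ι : Type*} [Semiring k] [AddCommMonoid V] [Module k V] {lam : ι → ℕ}

lemma sigma_fin_mk_eq_mk_iff {i r : ι} {a : Fin (lam i)} {b : Fin (lam r)} :
    (⟨i, a⟩ : Σ i, Fin (lam i)) = ⟨r, b⟩ ↔ i = r ∧ (a : ℕ) = b := by
  constructor
  · rintro ⟨⟩
    exact ⟨rfl, rfl⟩
  · rintro ⟨rfl, h⟩
    rw [Fin.ext h]

def IsJordanBasis (B : Module.Basis (Σ i, Fin (lam i)) k V) (x : Module.End k V) : Prop :=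
  ∀ (i : ι) (j : Fin (lam i)), x (B ⟨i, j⟩) = if 0 < (j : ℕ) then B ⟨i, j.truncSub 1⟩ else 0

variable {B : Module.Basis (Σ i, Fin (lam i)) k V} {x : Module.End k V}

lemma IsJordanBasis.repr_apply (hB : IsJordanBasis B x) (w : V) (r : ι) (t : Fin (lam r)) :
    B.repr (x w) ⟨r, t⟩ =
      if h : (t : ℕ) + 1 < lam r then B.repr w ⟨r, ⟨t + 1, h⟩⟩ else 0 := by
  classical
  have hrepr : ∀ (i : ι) (j : Fin (lam i)), B.repr (x (B ⟨i, j⟩)) ⟨r, t⟩ =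
      if i = r ∧ (j : ℕ) = t + 1 then 1 else 0 := by
    intro i j
    rw [hB i j]
    by_cases hj : 0 < (j : ℕ)
    · simp only [if_pos hj, Module.Basis.repr_self, Finsupp.single_apply,
        sigma_fin_mk_eq_mk_iff, Fin.val_truncSub]
      exact if_congr (and_congr_right fun _ => by omega) rfl rfl
    · rw [if_neg hj, if_neg fun h => by have := h.2; omega, map_zero, Finsupp.coe_zero,
        Pi.zero_apply]
  split_ifs with h
  · refine LinearMap.congr_fun (f := Finsupp.lapply ⟨r, t⟩ ∘ₗ B.repr.toLinearMap ∘ₗ x)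
      (g := Finsupp.lapply ⟨r, ⟨t + 1, h⟩⟩ ∘ₗ B.repr.toLinearMap) (B.ext fun ⟨i, j⟩ => ?_) w
    simp only [LinearMap.comp_apply, LinearEquiv.coe_coe, Finsupp.lapply_apply,
      Module.Basis.repr_self, Finsupp.single_apply, sigma_fin_mk_eq_mk_iff, hrepr]
  · refine LinearMap.congr_fun (f := Finsupp.lapply ⟨r, t⟩ ∘ₗ B.repr.toLinearMap ∘ₗ x)
      (g := 0) (B.ext fun ⟨i, j⟩ => ?_) w
    simp only [LinearMap.comp_apply, LinearEquiv.coe_coe, Finsupp.lapply_apply,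
      LinearMap.zero_apply, hrepr]
    rw [if_neg]
    rintro ⟨rfl, hj⟩
    omega

lemma IsJordanBasis.commute_iff (hB : IsJordanBasis B x) (y : Module.End k V) :
    x * y = y * x ↔ ∀ i r, IntertwinesShift fun (j : Fin (lam i)) (s : Fin (lam r)) =>
      B.repr (y (B ⟨i, j⟩)) ⟨r, s⟩ := by
  have hyx (i : ι) (j : Fin (lam i)) (r : ι) (t : Fin (lam r)) :
      B.repr ((y * x) (B ⟨i, j⟩)) ⟨r, t⟩ =
        if 0 < (j : ℕ) then B.repr (y (B ⟨i, j.truncSub 1⟩)) ⟨r, t⟩ else 0 := by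
    rw [Module.End.mul_apply, hB i j]
    split_ifs <;> simp
  constructor
  · intro h i r j t
    rw [← hB.repr_apply, ← hyx, ← Module.End.mul_apply, h]
  · intro h
    refine B.ext fun ⟨i, j⟩ => B.ext_elem fun ⟨r, t⟩ => ?_
    rw [Module.End.mul_apply, hB.repr_apply, hyx]
    exact h i r j t

end JordanBasis

theorem stmt4_general (k : Type*) [Field k] (V : Type*) [AddCommGroup V] [Module k V]
    (x y : Module.End k V) (l : ℕ) (lam : Fin l → ℕ)
    (hpos : ∀ i, 0 < lam i)
    (B : Module.Basis (Σ i : Fin l, Fin (lam i)) k V)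
    (hB : ∀ (i : Fin l) (j : Fin (lam i)),
      x (B ⟨i, j⟩) =
        if h : 0 < (j : ℕ) then
          B ⟨i, ⟨(j : ℕ) - 1, Nat.lt_of_le_of_lt (Nat.sub_le _ _) j.isLt⟩⟩
        else 0)
    (c : (Σ i : Fin l, Fin (lam i)) → (Σ i : Fin l, Fin (lam i)) → k)
    (hc : ∀ a b, c a b = B.repr (y (B a)) b) :
    x * y = y * x ↔
      ((∀ (i r : Fin l) (j : Fin (lam i)) (s : Fin (lam r)) (m : ℕ)
          (hm₁ : m ≤ (s : ℕ)) (hm₂ : m ≤ (j : ℕ)),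
          c ⟨i, j⟩ ⟨r, s⟩ =
            c ⟨i, ⟨(j : ℕ) - m, Nat.lt_of_le_of_lt (Nat.sub_le _ _) j.isLt⟩⟩
              ⟨r, ⟨(s : ℕ) - m, Nat.lt_of_le_of_lt (Nat.sub_le _ _) s.isLt⟩⟩) ∧
       (∀ (i r : Fin l) (j : Fin (lam i)) (s : Fin (lam r)),
          (j : ℕ) < (s : ℕ) → c ⟨i, j⟩ ⟨r, s⟩ = 0) ∧
       (∀ (i r : Fin l) (j : Fin (lam i)),
          (j : ℕ) ≠ lam i - 1 →
          c ⟨i, j⟩ ⟨r, ⟨lam r - 1, Nat.sub_lt (hpos r) one_pos⟩⟩ = 0)) := by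
  have hJordan : IsJordanBasis B x := fun i j => (hB i j).trans (dite_eq_ite ..)
  rw [hJordan.commute_iff y]
  simp only [← hc]
  refine (forall_congr' fun i => forall_congr' fun r => intertwinesShift_iff (hpos r)).trans ?_
  simp only [forall_and]
  rfl

/-- with `x` a nilpotent endomorphism with Jordan basis `{v_{ij}}`
(0-indexed positions: `x v_{i,0} = 0`, `x v_{i,j} = v_{i,j-1}` for `j > 0`), an
endomorphism `y` with coefficients `c (i,j) (r,s) = c_{ij}^{rs}(y)` commutes with `x`
iff (i) `c_{ij}^{rs} = c_{i,j-m}^{r,s-m}` for `m ≤ s`, `m ≤ j`; (ii) `c_{ij}^{rs} = 0`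
when `s > j`; (iii) `c_{ij}^{r,λ_r} = 0` when `j` is not the last position of row `i`. -/
theorem stmt4 (k : Type*) [Field k] (V : Type*) [AddCommGroup V] [Module k V]
    (x y : Module.End k V) (l : ℕ) (lam : Fin l → ℕ)
    (hanti : Antitone lam) (hpos : ∀ i, 0 < lam i)
    (B : Module.Basis (Σ i : Fin l, Fin (lam i)) k V)
    (hB : ∀ (i : Fin l) (j : Fin (lam i)),
      x (B ⟨i, j⟩) =
        if h : 0 < (j : ℕ) then
          B ⟨i, ⟨(j : ℕ) - 1, Nat.lt_of_le_of_lt (Nat.sub_le _ _) j.isLt⟩⟩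
        else 0)
    (c : (Σ i : Fin l, Fin (lam i)) → (Σ i : Fin l, Fin (lam i)) → k)
    (hc : ∀ a b, c a b = B.repr (y (B a)) b) :
    x * y = y * x ↔
      ((∀ (i r : Fin l) (j : Fin (lam i)) (s : Fin (lam r)) (m : ℕ)
          (hm₁ : m ≤ (s : ℕ)) (hm₂ : m ≤ (j : ℕ)),
          c ⟨i, j⟩ ⟨r, s⟩ =
            c ⟨i, ⟨(j : ℕ) - m, Nat.lt_of_le_of_lt (Nat.sub_le _ _) j.isLt⟩⟩
              ⟨r, ⟨(s : ℕ) - m, Nat.lt_of_le_of_lt (Nat.sub_le _ _) s.isLt⟩⟩) ∧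
       (∀ (i r : Fin l) (j : Fin (lam i)) (s : Fin (lam r)),
          (j : ℕ) < (s : ℕ) → c ⟨i, j⟩ ⟨r, s⟩ = 0) ∧
       (∀ (i r : Fin l) (j : Fin (lam i)),
          (j : ℕ) ≠ lam i - 1 →
          c ⟨i, j⟩ ⟨r, ⟨lam r - 1, Nat.sub_lt (hpos r) one_pos⟩⟩ = 0)) :=
  stmt4_general k V x y l lam hpos B hB c hc
end

section
/- Let y ∈ N_0 be a self-adjoint nilpotent endomorphism of a 2n-dimensional symplectic space W over k, and z ∈ Sp(W) commute with y. With the symmetric Jordan basis {w_{ij}} for y and distinct part sizes l_h of the Jordan type with index sets I_h (of size 2n_{l_h}), the block matrix (b_{i,λ_i}^{r,λ_r}(z))_{i,r∈I_h} lies in Sp_{2n_{l_h}}(k) for each h ≥ 1, i.e., it preserves the induced symplectic form on W_h = ker(y^{l_h})/(ker(y^{l_h−1}) + im(y) ∩ ker(y^{l_h})). -/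
/-- let `y ∈ N₀` be a nilpotent endomorphism of a symplectic space
`(W, ω)` with `ω(yw, w) = 0` for all `w` (self-adjointness), and let `z ∈ Sp(W)`
commute with `y`.  Then for each part size `l` of the Jordan type, `z` preserves
`ker yˡ` and `ker y^{l-1} + (im y ∩ ker yˡ)`, hence induces a map on
`W_h = ker yˡ / (ker y^{l-1} + im y ∩ ker yˡ)`, and this induced map preserves the
induced symplectic form `(w, w') ↦ ω(y^{l-1} w, w')` on `W_h`; i.e. the corresponding
block matrix lies in `Sp_{2 n_{l_h}}(k)`. -/
theorem stmt14 (k : Type*) [Field k] (W : Type*) [AddCommGroup W] [Module k W]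
    [FiniteDimensional k W]
    (ω : LinearMap.BilinForm k W) (halt : ∀ w, ω w w = 0) (hnd : ω.Nondegenerate)
    (y : Module.End k W) (hynil : IsNilpotent y)
    (hself : ∀ w, ω (y w) w = 0)
    (z : Module.End k W) (hzunit : IsUnit z)
    (hzsymp : ∀ w w', ω (z w) (z w') = ω w w')
    (hcomm : z * y = y * z)
    (l : ℕ) (hl : 0 < l) :
    (Submodule.map z (LinearMap.ker (y ^ l)) ≤ LinearMap.ker (y ^ l)) ∧
    (Submodule.map z
        (LinearMap.ker (y ^ (l - 1)) ⊔ (LinearMap.range y ⊓ LinearMap.ker (y ^ l)))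
      ≤ LinearMap.ker (y ^ (l - 1)) ⊔ (LinearMap.range y ⊓ LinearMap.ker (y ^ l))) ∧
    (∀ w w', w ∈ LinearMap.ker (y ^ l) → w' ∈ LinearMap.ker (y ^ l) →
      ω ((y ^ (l - 1)) (z w)) (z w') = ω ((y ^ (l - 1)) w) w') := by
  have hc : ∀ m : ℕ, z * y ^ m = y ^ m * z := fun m =>
    (Commute.pow_right (hcomm) m)
  have hkz : ∀ m : ℕ, Submodule.map z (LinearMap.ker (y ^ m)) ≤ LinearMap.ker (y ^ m) := by
    intro m w hw
    obtain ⟨v, hv, rfl⟩ := hw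
    have : (y ^ m) (z v) = z ((y ^ m) v) := by
      have := congrArg (fun f : Module.End k W => f v) (hc m)
      simpa [Module.End.mul_apply] using this.symm
    simp [LinearMap.mem_ker, this, LinearMap.mem_ker.mp hv]
  refine ⟨hkz l, ?_, ?_⟩
  · rw [Submodule.map_sup]
    refine sup_le_sup (hkz (l-1)) ?_
    refine le_trans (Submodule.map_inf_le z) (inf_le_inf ?_ (hkz l))
    intro w hw
    obtain ⟨v, hv, rfl⟩ := hw
    obtain ⟨u, rfl⟩ := hv
    refine ⟨z u, ?_⟩
    have := congrArg (fun f : Module.End k W => f u) hcomm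
    simpa [Module.End.mul_apply] using this.symm
  · intro w w' hw hw'
    have : (y ^ (l-1)) (z w) = z ((y ^ (l-1)) w) := by
      have := congrArg (fun f : Module.End k W => f w) (hc (l-1))
      simpa [Module.End.mul_apply] using this.symm
    rw [this, hzsymp]
end

section
/- Under the embedding V × N ⊂ W × N_0 given by W = V ⊕ V*, v ↦ (v,0), x ↦ (x,x^t), if (v,x) lies in the enhanced orbit O_{μ;ν} (for GL(V)), then ((v,0),(x,x^t)) lies in the exotic orbit with the same label (μ;ν), and its Jordan type as a nilpotent endomorphism of W is λ∪λ, i.e., the GL(W)-orbit of (v,0) paired with (x,x^t) in W × N(W) is O_{μ∪μ; ν∪ν}. -/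
/-!
Order the basis of `W` so that, in each block `h`, the first `nh h` Jordan strings span `V`
and the remaining ones, read backwards, span `V*`. In this ordering `x ↦ (x, xᵗ)` becomes
`x ↦ diag(x, xᵀ)`, the Jordan form `J_{λ∪λ}` is `diag(J_λ, J_λᵀ)`, the symplectic Gram matrix is
`[[0, 1], [-1, 0]]` and the standard vector `w₀` is `(v₀, 0)`. So if `(v, x) = g • (v₀, J_λ)`,
then `diag(g, g⁻ᵀ)`, which is symplectic, carries `(w₀, J_{λ∪λ})` to the embedded pair; this gives
the exotic orbit and the `GL(W)`-orbit at once.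
-/

open Matrix

/-- Jordan nilpotent matrix with distinct block sizes `d h` and multiplicities `nh h`. -/
def jordanMatrix (k : Type*) [Field k] (m : ℕ) (d nh : Fin m → ℕ) :
    Matrix (Σ h : Fin m, Fin (nh h) × Fin (d h)) (Σ h : Fin m, Fin (nh h) × Fin (d h)) k :=
  fun a b =>
    if a.1 = b.1 ∧ (a.2.1 : ℕ) = (b.2.1 : ℕ) ∧ (a.2.2 : ℕ) + 1 = (b.2.2 : ℕ) then 1 else 0

/-- The standard representative vector `v = Σ_h v_{i(h), j_h}` of the enhanced orbit
`O_{μ;ν}`, where `μ` takes value `j h` on block `h`. -/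
def enhVector (k : Type*) [Field k] (m : ℕ) (d nh j : Fin m → ℕ) :
    (Σ h : Fin m, Fin (nh h) × Fin (d h)) → k :=
  fun a => if (a.2.1 : ℕ) = 0 ∧ 0 < j a.1 ∧ (a.2.2 : ℕ) = j a.1 - 1 then 1 else 0

/-- The value of `μ` on the block after `h` (`0` beyond the last block). -/
def jNext (m : ℕ) (j : Fin m → ℕ) (h : Fin m) : ℕ :=
  if hlt : h.val + 1 < m then j ⟨h.val + 1, hlt⟩ else 0

/-- `h ∈ J` iff `j_h > j_{h+1}` and `k_h < k_{h-1}` (with `k_0 = ∞`). -/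
def inJ (m : ℕ) (j kk : Fin m → ℕ) (h : Fin m) : Bool :=
  decide (jNext m j h < j h) &&
    (decide (h.val = 0) ||
      decide (kk h < kk ⟨h.val - 1, lt_of_le_of_lt (Nat.sub_le _ _) h.isLt⟩))

/-- The size `n_{l_h} - 1` (if `h ∈ J`) or `n_{l_h}` (otherwise). -/
def sz (m : ℕ) (nh j kk : Fin m → ℕ) (h : Fin m) : ℕ :=
  if inJ m j kk h then nh h - 1 else nh h

/-- The number of indices `i` lying in blocks before `h`. -/
def offset (m : ℕ) (nh : Fin m → ℕ) (h : Fin m) : ℕ :=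
  ∑ h' ∈ Finset.univ.filter (fun h' => h' < h), nh h'

/-- `b(μ;ν) = |ν| + 2n(μ) + 2n(ν)`, computed from the block data (0-indexed `n(·)`). -/
def bQ (m : ℕ) (nh j kk : Fin m → ℕ) : ℕ :=
  (∑ h, nh h * kk h) +
    2 * ∑ h, ∑ t ∈ Finset.range (nh h), (offset m nh h + t) * (j h + kk h)

/-- The stabilizer in `GL` of the pair `(v, J)`. -/
def enhStabilizer (k : Type*) [Field k] {ι : Type*} [Fintype ι] [DecidableEq ι]
    (J : Matrix ι ι k) (v : ι → k) : Subgroup (GL ι k) where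
  carrier := {g | (g : Matrix ι ι k) * J = J * (g : Matrix ι ι k) ∧
    (g : Matrix ι ι k) *ᵥ v = v}
  one_mem' := by simp
  mul_mem' := by
    intro a b ha hb
    obtain ⟨ha1, ha2⟩ := ha
    obtain ⟨hb1, hb2⟩ := hb
    constructor
    · show (↑(a * b) : Matrix ι ι k) * J = J * (↑(a * b) : Matrix ι ι k)
      rw [Units.val_mul, mul_assoc, hb1, ← mul_assoc, ha1, mul_assoc]
    · show (↑(a * b) : Matrix ι ι k) *ᵥ v = v
      rw [Units.val_mul, ← Matrix.mulVec_mulVec, hb2, ha2]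
  inv_mem' := by
    intro u hu
    obtain ⟨hu1, hu2⟩ := hu
    constructor
    · show (↑u⁻¹ : Matrix ι ι k) * J = J * (↑u⁻¹ : Matrix ι ι k)
      calc (↑u⁻¹ : Matrix ι ι k) * J
          = (↑u⁻¹ : Matrix ι ι k) * J * 1 := (mul_one _).symm
        _ = (↑u⁻¹ : Matrix ι ι k) * J * ((↑u : Matrix ι ι k) * (↑u⁻¹ : Matrix ι ι k)) := by
            rw [Units.mul_inv]
        _ = (↑u⁻¹ : Matrix ι ι k) * (J * (↑u : Matrix ι ι k)) * (↑u⁻¹ : Matrix ι ι k) := by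
            simp only [mul_assoc]
        _ = (↑u⁻¹ : Matrix ι ι k) * ((↑u : Matrix ι ι k) * J) * (↑u⁻¹ : Matrix ι ι k) := by
            rw [hu1]
        _ = ((↑u⁻¹ : Matrix ι ι k) * (↑u : Matrix ι ι k)) * (J * (↑u⁻¹ : Matrix ι ι k)) := by
            simp only [mul_assoc]
        _ = J * (↑u⁻¹ : Matrix ι ι k) := by rw [Units.inv_mul, one_mul]
    · show (↑u⁻¹ : Matrix ι ι k) *ᵥ v = v
      conv_lhs => rw [← hu2]
      rw [Matrix.mulVec_mulVec, Units.inv_mul, Matrix.one_mulVec]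

/-- The subgroup of `GL ι k` preserving the bilinear form given by the Gram matrix `Ω`. -/
def sympGL (k : Type*) [Field k] {ι : Type*} [Fintype ι] [DecidableEq ι]
    (Ω : Matrix ι ι k) : Subgroup (GL ι k) where
  carrier := {g | (g : Matrix ι ι k)ᵀ * Ω * (g : Matrix ι ι k) = Ω}
  one_mem' := by simp
  mul_mem' := by
    intro a b ha hb
    show (↑(a * b) : Matrix ι ι k)ᵀ * Ω * (↑(a * b) : Matrix ι ι k) = Ω
    have h : ((↑b : Matrix ι ι k)ᵀ * ((↑a : Matrix ι ι k)ᵀ * Ω * (↑a : Matrix ι ι k)) *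
          (↑b : Matrix ι ι k))
        = ((↑(a * b) : Matrix ι ι k)ᵀ * Ω * (↑(a * b) : Matrix ι ι k)) := by
      rw [Units.val_mul, Matrix.transpose_mul]; noncomm_ring
    rw [← h, ha]; exact hb
  inv_mem' := by
    intro u hu
    show (↑u⁻¹ : Matrix ι ι k)ᵀ * Ω * (↑u⁻¹ : Matrix ι ι k) = Ω
    have e1 : ((↑u⁻¹ : Matrix ι ι k)ᵀ * (↑u : Matrix ι ι k)ᵀ) = 1 := by
      rw [← Matrix.transpose_mul, Units.mul_inv, Matrix.transpose_one]
    calc (↑u⁻¹ : Matrix ι ι k)ᵀ * Ω * (↑u⁻¹ : Matrix ι ι k)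
        = (↑u⁻¹ : Matrix ι ι k)ᵀ * ((↑u : Matrix ι ι k)ᵀ * Ω * (↑u : Matrix ι ι k)) *
            (↑u⁻¹ : Matrix ι ι k) := by rw [hu]
      _ = ((↑u⁻¹ : Matrix ι ι k)ᵀ * (↑u : Matrix ι ι k)ᵀ) * Ω *
            ((↑u : Matrix ι ι k) * (↑u⁻¹ : Matrix ι ι k)) := by noncomm_ring
      _ = Ω := by rw [e1, Units.mul_inv, one_mul, mul_one]

/-- The Gram matrix of the symplectic form on `W = V ⊕ V*` in the symmetric Jordan
basis `{w_{ij}}`: within each block `h` (now of multiplicity `2 nh h`), index `i` pairs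
with `2 nh h - 1 - i` in reversed position, with sign `+1` on the `V`-side. -/
def omegaMat (k : Type*) [Field k] (m : ℕ) (d nh : Fin m → ℕ) :
    Matrix (Σ h : Fin m, Fin (2 * nh h) × Fin (d h))
      (Σ h : Fin m, Fin (2 * nh h) × Fin (d h)) k :=
  fun a b =>
    if a.1 = b.1 ∧ (a.2.1 : ℕ) + (b.2.1 : ℕ) = 2 * nh a.1 - 1 ∧
        (a.2.2 : ℕ) + (b.2.2 : ℕ) = d a.1 - 1 then
      (if (a.2.1 : ℕ) < nh a.1 then 1 else -1)
    else 0

/-- The stabilizer in `Sp(W)` of the exotic representative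
`(w, y) = (Σ_h w_{i(h),j_h}, J_{λ∪λ})`. -/
def exoticStabilizer (k : Type*) [Field k] (m : ℕ) (d nh j : Fin m → ℕ) :
    Subgroup (GL (Σ h : Fin m, Fin (2 * nh h) × Fin (d h)) k) :=
  sympGL k (omegaMat k m d nh) ⊓
    enhStabilizer k (jordanMatrix k m d (fun h => 2 * nh h))
      (enhVector k m d (fun h => 2 * nh h) j)

/-- The embedding `End(V) → End(W)`, `x ↦ (x, xᵗ)`, written in the symmetric Jordan
basis `{w_{ij}}` of `W = V ⊕ V*` (within block `h`, indices `i < nh h` form the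
`V`-side and `i ≥ nh h` the dual side, with reversed positions). -/
def embMatrix (k : Type*) [Field k] (m : ℕ) (d nh : Fin m → ℕ)
    (A : Matrix (Σ h : Fin m, Fin (nh h) × Fin (d h))
      (Σ h : Fin m, Fin (nh h) × Fin (d h)) k) :
    Matrix (Σ h : Fin m, Fin (2 * nh h) × Fin (d h))
      (Σ h : Fin m, Fin (2 * nh h) × Fin (d h)) k :=
  fun a b =>
    if ha : (a.2.1 : ℕ) < nh a.1 then
      if hb : (b.2.1 : ℕ) < nh b.1 then
        A ⟨a.1, (⟨a.2.1, ha⟩, a.2.2)⟩ ⟨b.1, (⟨b.2.1, hb⟩, b.2.2)⟩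
      else 0
    else
      if hb : (b.2.1 : ℕ) < nh b.1 then 0
      else
        A ⟨b.1, (⟨2 * nh b.1 - 1 - (b.2.1 : ℕ), by have := b.2.1.isLt; omega⟩,
              ⟨d b.1 - 1 - (b.2.2 : ℕ), by have := b.2.2.isLt; omega⟩)⟩
          ⟨a.1, (⟨2 * nh a.1 - 1 - (a.2.1 : ℕ), by have := a.2.1.isLt; omega⟩,
              ⟨d a.1 - 1 - (a.2.2 : ℕ), by have := a.2.2.isLt; omega⟩)⟩

/-- The embedding `V → W = V ⊕ V*`, `v ↦ (v, 0)`, in the bases above. -/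
def embVec (k : Type*) [Field k] (m : ℕ) (d nh : Fin m → ℕ)
    (v : (Σ h : Fin m, Fin (nh h) × Fin (d h)) → k) :
    (Σ h : Fin m, Fin (2 * nh h) × Fin (d h)) → k :=
  fun a =>
    if ha : (a.2.1 : ℕ) < nh a.1 then v ⟨a.1, (⟨a.2.1, ha⟩, a.2.2)⟩ else 0

lemma eq_reindex_iff {α m n : Type*} {M : Matrix n n α} {N : Matrix m m α} (e : m ≃ n) :
    M = reindex e e N ↔ ∀ s t, M (e s) (e t) = N s t := by
  constructor
  · rintro rfl s t
    simp
  · intro H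
    ext a b
    simpa using H (e.symm a) (e.symm b)

section Contragredient

variable {k : Type*} [Field k] {n p : Type*} [Fintype n] [DecidableEq n] [Fintype p] [DecidableEq p]

/-- The action of `g` on `V ⊕ V*`, in a basis of `V` followed by its dual basis. -/
def contragredientSum (g : GL n k) : GL (n ⊕ n) k where
  val := fromBlocks (g : Matrix n n k) 0 0 (↑g⁻¹ : Matrix n n k)ᵀ
  inv := fromBlocks (↑g⁻¹ : Matrix n n k) 0 0 (g : Matrix n n k)ᵀ
  val_inv := by simp [fromBlocks_multiply, ← transpose_mul, fromBlocks_one]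
  inv_val := by simp [fromBlocks_multiply, ← transpose_mul, fromBlocks_one]

lemma coe_contragredientSum (g : GL n k) :
    (contragredientSum g : Matrix (n ⊕ n) (n ⊕ n) k)
      = fromBlocks (g : Matrix n n k) 0 0 (↑g⁻¹ : Matrix n n k)ᵀ :=
  rfl

lemma coe_contragredientSum_inv (g : GL n k) :
    (↑(contragredientSum g)⁻¹ : Matrix (n ⊕ n) (n ⊕ n) k)
      = fromBlocks (↑g⁻¹ : Matrix n n k) 0 0 (g : Matrix n n k)ᵀ :=
  rfl

lemma contragredientSum_mem_sympGL (g : GL n k) :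
    contragredientSum g ∈ sympGL k (fromBlocks 0 1 (-1) 0) := by
  show (contragredientSum g : Matrix (n ⊕ n) (n ⊕ n) k)ᵀ * _ * _ = _
  simp [coe_contragredientSum, fromBlocks_transpose, fromBlocks_multiply, ← transpose_mul]

lemma contragredientSum_conj (g : GL n k) (A : Matrix n n k) :
    fromBlocks ((g : Matrix n n k) * A * (↑g⁻¹ : Matrix n n k)) 0 0
        ((g : Matrix n n k) * A * (↑g⁻¹ : Matrix n n k))ᵀ
      = (contragredientSum g : Matrix (n ⊕ n) (n ⊕ n) k) * fromBlocks A 0 0 Aᵀ *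
          (↑(contragredientSum g)⁻¹ : Matrix (n ⊕ n) (n ⊕ n) k) := by
  rw [coe_contragredientSum, coe_contragredientSum_inv, fromBlocks_multiply, fromBlocks_multiply]
  simp [transpose_mul, Matrix.mul_assoc]

lemma contragredientSum_mulVec (g : GL n k) (v : n → k) :
    (contragredientSum g : Matrix (n ⊕ n) (n ⊕ n) k) *ᵥ Sum.elim v 0
      = Sum.elim ((g : Matrix n n k) *ᵥ v) 0 := by
  simp [coe_contragredientSum, fromBlocks_mulVec]

lemma map_reindexAlgEquiv_mem_sympGL (e : n ≃ p) {g : GL n k} {Ω : Matrix n n k}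
    (hg : g ∈ sympGL k Ω) :
    Units.map (reindexAlgEquiv k k e : Matrix n n k →* Matrix p p k) g
      ∈ sympGL k (reindex e e Ω) := by
  show (reindexAlgEquiv k k e g)ᵀ * _ * reindexAlgEquiv k k e g = _
  have hg' : (g : Matrix n n k)ᵀ * Ω * g = Ω := hg
  simp only [coe_reindexAlgEquiv, reindex_apply, transpose_submatrix, submatrix_mul_equiv, hg']

theorem exists_mem_sympGL_conj_reindex (e : n ⊕ n ≃ p) (g : GL n k) (v : n → k)
    (A : Matrix n n k) :
    ∃ G ∈ sympGL k (reindex e e (fromBlocks 0 1 (-1) 0)),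
      Sum.elim ((g : Matrix n n k) *ᵥ v) 0 ∘ e.symm
          = (G : Matrix p p k) *ᵥ (Sum.elim v 0 ∘ e.symm) ∧
      reindex e e (fromBlocks ((g : Matrix n n k) * A * (↑g⁻¹ : Matrix n n k)) 0 0
          ((g : Matrix n n k) * A * (↑g⁻¹ : Matrix n n k))ᵀ)
        = (G : Matrix p p k) * reindex e e (fromBlocks A 0 0 Aᵀ) * (↑G⁻¹ : Matrix p p k) := by
  refine ⟨Units.map (reindexAlgEquiv k k e : Matrix (n ⊕ n) (n ⊕ n) k →* Matrix p p k)
      (contragredientSum g),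
    map_reindexAlgEquiv_mem_sympGL e (contragredientSum_mem_sympGL g), ?_, ?_⟩
  · rw [Units.coe_map, MonoidHom.coe_coe, coe_reindexAlgEquiv, reindex_apply,
      submatrix_mulVec_equiv, Equiv.symm_symm, Function.comp_assoc, Equiv.symm_comp_self,
      Function.comp_id, contragredientSum_mulVec]
  · rw [Units.coe_map, Units.coe_map_inv, contragredientSum_conj, MonoidHom.coe_coe,
      ← coe_reindexAlgEquiv k k, map_mul, map_mul]

end Contragredient

abbrev BlockIndex {m : ℕ} (d nh : Fin m → ℕ) := Σ h : Fin m, Fin (nh h) × Fin (d h)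

section DoubledIndex

variable {k : Type*} [Field k] {m : ℕ} (d nh : Fin m → ℕ)

def sumDoubleEquiv : BlockIndex d nh ⊕ BlockIndex d nh ≃ BlockIndex d (fun h => 2 * nh h) where
  toFun := Sum.elim (fun a => ⟨a.1, (⟨a.2.1, by beta_reduce; omega⟩, a.2.2)⟩)
    (fun a => ⟨a.1, (⟨2 * nh a.1 - 1 - a.2.1, by beta_reduce; omega⟩,
      ⟨d a.1 - 1 - a.2.2, by omega⟩)⟩)
  invFun a := if h : (a.2.1 : ℕ) < nh a.1 then .inl ⟨a.1, (⟨a.2.1, h⟩, a.2.2)⟩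
    else .inr ⟨a.1, (⟨2 * nh a.1 - 1 - a.2.1, by have := a.2.1.isLt; beta_reduce at this; omega⟩,
      ⟨d a.1 - 1 - a.2.2, by omega⟩)⟩
  left_inv := by
    rintro (⟨h, i, t⟩ | ⟨h, i, t⟩)
    · simp
    · simp [show ¬ 2 * nh h - 1 - (i : ℕ) < nh h by omega, Fin.ext_iff]
      omega
  right_inv := by
    rintro ⟨h, i, t⟩
    have := i.isLt
    beta_reduce at this
    by_cases hi : (i : ℕ) < nh h
    · simp [hi]
    · simp [hi, Fin.ext_iff]
      omega

lemma sumDoubleEquiv_inl (a : BlockIndex d nh) :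
    sumDoubleEquiv d nh (.inl a) = ⟨a.1, (⟨a.2.1, by beta_reduce; omega⟩, a.2.2)⟩ :=
  rfl

lemma sumDoubleEquiv_inr (a : BlockIndex d nh) :
    sumDoubleEquiv d nh (.inr a) = ⟨a.1, (⟨2 * nh a.1 - 1 - a.2.1, by beta_reduce; omega⟩,
      ⟨d a.1 - 1 - a.2.2, by omega⟩)⟩ :=
  rfl

lemma not_two_mul_sub_one_sub_lt {n : ℕ} (i : Fin n) : ¬ 2 * n - 1 - (i : ℕ) < n := by
  omega

lemma embMatrix_eq_reindex (A : Matrix (BlockIndex d nh) (BlockIndex d nh) k) :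
    embMatrix k m d nh A
      = reindex (sumDoubleEquiv d nh) (sumDoubleEquiv d nh) (fromBlocks A 0 0 Aᵀ) := by
  rw [eq_reindex_iff]
  rintro (⟨ha, ia, ta⟩ | ⟨ha, ia, ta⟩) (⟨hb, ib, tb⟩ | ⟨hb, ib, tb⟩) <;>
    simp (disch := omega) [embMatrix, sumDoubleEquiv_inl, sumDoubleEquiv_inr, Nat.sub_sub_self,
      not_two_mul_sub_one_sub_lt]

lemma jordanMatrix_two_mul_eq_reindex :
    jordanMatrix k m d (fun h => 2 * nh h)
      = reindex (sumDoubleEquiv d nh) (sumDoubleEquiv d nh)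
          (fromBlocks (jordanMatrix k m d nh) 0 0 (jordanMatrix k m d nh)ᵀ) := by
  rw [eq_reindex_iff]
  rintro (⟨ha, ia, ta⟩ | ⟨ha, ia, ta⟩) (⟨hb, ib, tb⟩ | ⟨hb, ib, tb⟩) <;>
    rcases eq_or_ne ha hb with rfl | hne <;>
    simp [jordanMatrix, sumDoubleEquiv_inl, sumDoubleEquiv_inr, *] <;>
    first | omega | (split_ifs <;> first | rfl | omega)

lemma omegaMat_eq_reindex :
    omegaMat k m d nh
      = reindex (sumDoubleEquiv d nh) (sumDoubleEquiv d nh) (fromBlocks 0 1 (-1) 0) := by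
  rw [eq_reindex_iff]
  -- The `Decidable` instances of the `if`s also mention `sumDoubleEquiv`,
  -- and `simp` would rewrite the condition without them.
  rintro (⟨ha, ia, ta⟩ | ⟨ha, ia, ta⟩) (⟨hb, ib, tb⟩ | ⟨hb, ib, tb⟩) <;>
    rcases eq_or_ne ha hb with rfl | hne <;>
    dsimp +instances only [sumDoubleEquiv_inl, sumDoubleEquiv_inr] <;>
    simp [omegaMat, one_apply, Fin.ext_iff, *] <;>
    first | omega | (split_ifs <;> first | rfl | omega | simp)

lemma embVec_eq_comp_symm (v : BlockIndex d nh → k) :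
    embVec k m d nh v = Sum.elim v 0 ∘ (sumDoubleEquiv d nh).symm := by
  rw [Equiv.eq_comp_symm]
  ext (⟨h, i, t⟩ | ⟨h, i, t⟩)
  · simp [embVec, sumDoubleEquiv_inl]
  · simp [embVec, sumDoubleEquiv_inr, not_two_mul_sub_one_sub_lt]

lemma enhVector_two_mul_eq_comp_symm (j : Fin m → ℕ) :
    enhVector k m d (fun h => 2 * nh h) j
      = Sum.elim (enhVector k m d nh j) 0 ∘ (sumDoubleEquiv d nh).symm := by
  rw [Equiv.eq_comp_symm]
  ext (⟨h, i, t⟩ | ⟨h, i, t⟩)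
  · rfl
  · dsimp +instances only [Function.comp_apply, sumDoubleEquiv_inr]
    simp [enhVector]
    omega

end DoubledIndex

theorem stmt19_general (k : Type*) [Field k] (m : ℕ) (d nh j : Fin m → ℕ)
    (v : (Σ h : Fin m, Fin (nh h) × Fin (d h)) → k)
    (x : Matrix (Σ h : Fin m, Fin (nh h) × Fin (d h))
      (Σ h : Fin m, Fin (nh h) × Fin (d h)) k)
    (hvx : ∃ g : GL (Σ h : Fin m, Fin (nh h) × Fin (d h)) k,
      v = (g : Matrix _ _ k) *ᵥ enhVector k m d nh j ∧
      x = (g : Matrix _ _ k) * jordanMatrix k m d nh * (↑g⁻¹ : Matrix _ _ k)) :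
    (∃ g' : GL (Σ h : Fin m, Fin (2 * nh h) × Fin (d h)) k,
      g' ∈ sympGL k (omegaMat k m d nh) ∧
      embVec k m d nh v = (g' : Matrix _ _ k) *ᵥ enhVector k m d (fun h => 2 * nh h) j ∧
      embMatrix k m d nh x
        = (g' : Matrix _ _ k) * jordanMatrix k m d (fun h => 2 * nh h) *
          (↑g'⁻¹ : Matrix _ _ k)) ∧
    (∃ g'' : GL (Σ h : Fin m, Fin (2 * nh h) × Fin (d h)) k,
      embVec k m d nh v = (g'' : Matrix _ _ k) *ᵥ enhVector k m d (fun h => 2 * nh h) j ∧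
      embMatrix k m d nh x
        = (g'' : Matrix _ _ k) * jordanMatrix k m d (fun h => 2 * nh h) *
          (↑g''⁻¹ : Matrix _ _ k)) := by
  obtain ⟨g, rfl, rfl⟩ := hvx
  obtain ⟨G, hG, hv, hx⟩ := exists_mem_sympGL_conj_reindex (sumDoubleEquiv d nh) g
    (enhVector k m d nh j) (jordanMatrix k m d nh)
  rw [← omegaMat_eq_reindex] at hG
  rw [← embVec_eq_comp_symm, ← enhVector_two_mul_eq_comp_symm] at hv
  rw [← embMatrix_eq_reindex, ← jordanMatrix_two_mul_eq_reindex] at hx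
  exact ⟨⟨G, hG, hv, hx⟩, G, hv, hx⟩

/-- under the embedding `V × N ⊂ W × N₀` (`v ↦ (v,0)`, `x ↦ (x,xᵗ)`),
if `(v,x)` lies in the enhanced orbit `O_{μ;ν}` for `GL(V)` then the embedded pair
lies in the exotic `Sp(W)`-orbit with the same label `(μ;ν)`, and its `GL(W)`-orbit
in `W × N(W)` is `O_{μ∪μ; ν∪ν}` (both orbits having the same standard representative
`(w₀, J_{λ∪λ})`). -/
theorem stmt19 (k : Type*) [Field k] [IsAlgClosed k] (m : ℕ) (d nh j kk : Fin m → ℕ)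
    (hd : StrictAnti d) (hdpos : ∀ h, 0 < d h) (hnpos : ∀ h, 0 < nh h)
    (hsum : ∀ h, j h + kk h = d h) (hj : Antitone j) (hk : Antitone kk)
    (v : (Σ h : Fin m, Fin (nh h) × Fin (d h)) → k)
    (x : Matrix (Σ h : Fin m, Fin (nh h) × Fin (d h))
      (Σ h : Fin m, Fin (nh h) × Fin (d h)) k)
    (hvx : ∃ g : GL (Σ h : Fin m, Fin (nh h) × Fin (d h)) k,
      v = (g : Matrix _ _ k) *ᵥ enhVector k m d nh j ∧
      x = (g : Matrix _ _ k) * jordanMatrix k m d nh * (↑g⁻¹ : Matrix _ _ k)) :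
    (∃ g' : GL (Σ h : Fin m, Fin (2 * nh h) × Fin (d h)) k,
      g' ∈ sympGL k (omegaMat k m d nh) ∧
      embVec k m d nh v = (g' : Matrix _ _ k) *ᵥ enhVector k m d (fun h => 2 * nh h) j ∧
      embMatrix k m d nh x
        = (g' : Matrix _ _ k) * jordanMatrix k m d (fun h => 2 * nh h) *
          (↑g'⁻¹ : Matrix _ _ k)) ∧
    (∃ g'' : GL (Σ h : Fin m, Fin (2 * nh h) × Fin (d h)) k,
      embVec k m d nh v = (g'' : Matrix _ _ k) *ᵥ enhVector k m d (fun h => 2 * nh h) j ∧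
      embMatrix k m d nh x
        = (g'' : Matrix _ _ k) * jordanMatrix k m d (fun h => 2 * nh h) *
          (↑g''⁻¹ : Matrix _ _ k)) :=
  stmt19_general k m d nh j v x hvx
end
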